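/- arXiv:1509.05089 — 3 statements merged into one kernel-verified Lean document; each statement's English description precedes it below -/
import Mathlib

section
/- Let n ≥ 0 and let b_0, b_1, ..., b_{2n+1} be natural numbers satisfying Poincaré duality b_i = b_{2n+1-i} for all 0 ≤ i ≤ 2n+1. Then the secondary Euler characteristic Σ_{i=0}^{2n+1} (-1)^{i-1} · i · b_i is congruent modulo 2 to the Kervaire semi-characteristic Σ_{i=0}^{n} (-1)^i · b_i. -/
/-!
Modulo 2 every sign `(-1)^k` is `1`, so the secondary Euler characteristic reduces to `Σ i bᵢ` and
the semi-characteristic to `Σ_{i ≤ n} bᵢ`. Pairing `i` with `2n+1-i` and using duality, each pair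
contributes `(2n+1) bᵢ`, so `Σ i bᵢ = (2n+1) Σ_{i ≤ n} bᵢ`, which is `Σ_{i ≤ n} bᵢ` modulo 2.
-/

open Finset

theorem Finset.sum_range_two_mul_add_two_eq_sum_add_reflect {M : Type*} [AddCommMonoid M]
    (f : ℕ → M) (n : ℕ) :
    ∑ i ∈ range (2 * n + 2), f i = ∑ i ∈ range (n + 1), (f i + f (2 * n + 1 - i)) := by
  rw [show 2 * n + 2 = (n + 1) + (n + 1) by ring, sum_range_add, sum_add_distrib,
    ← sum_range_reflect (fun i ↦ f (n + 1 + i))]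
  refine congrArg _ (sum_congr rfl fun i hi ↦ congrArg f ?_)
  have := mem_range.mp hi
  omega

theorem sum_range_natCast_mul_of_palindrome {R : Type*} [Semiring R] (n : ℕ) (b : ℕ → R)
    (hdual : ∀ i ≤ 2 * n + 1, b i = b (2 * n + 1 - i)) :
    ∑ i ∈ range (2 * n + 2), (i : R) * b i = (2 * n + 1 : ℕ) * ∑ i ∈ range (n + 1), b i := by
  rw [sum_range_two_mul_add_two_eq_sum_add_reflect, mul_sum]
  refine sum_congr rfl fun i hi ↦ ?_
  have hin : i ≤ n := Nat.lt_succ_iff.mp (mem_range.mp hi)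
  rw [← hdual i (by omega), ← add_mul, ← Nat.cast_add, Nat.add_sub_cancel' (by omega)]

/-- For Betti numbers `b₀, …, b_{2n+1}` satisfying Poincaré duality `bᵢ = b_{2n+1-i}`,
the secondary Euler characteristic `Σᵢ (-1)^(i-1) i bᵢ` is congruent mod 2 to the
Kervaire semi-characteristic `Σ_{i=0}^{n} (-1)^i bᵢ`. -/
theorem secondary_euler_char_eq_kervaire_semicharacteristic_mod_two
    (n : ℕ) (b : ℕ → ℕ) (hdual : ∀ i ≤ 2 * n + 1, b i = b (2 * n + 1 - i)) :
    (∑ i ∈ Finset.range (2 * n + 2), (-1 : ℤ) ^ (i - 1) * (i : ℤ) * (b i : ℤ)) ≡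
      (∑ i ∈ Finset.range (n + 1), (-1 : ℤ) ^ i * (b i : ℤ)) [ZMOD 2] := by
  refine (ZMod.intCast_eq_intCast_iff _ _ 2).mp ?_
  push_cast
  simp only [CharTwo.neg_eq, one_pow, one_mul]
  have hodd : ((2 * n + 1 : ℕ) : ZMod 2) = 1 := by
    simp [show (2 : ZMod 2) = 0 from rfl]
  rw [sum_range_natCast_mul_of_palindrome n (fun i ↦ (b i : ZMod 2))
    fun i hi ↦ congrArg _ (hdual i hi), hodd, one_mul]
end

section
/- For a polynomial P ∈ ℤ[t] with coefficients b_i, define χ_j(P) = Σ_i (-1)^{i-j} · C(i,j) · b_i. Let P, Q ∈ ℤ[t] and let j ≥ 0. If χ_r(P) = 0 and χ_r(Q) = 0 for all 0 ≤ r < j, then χ_{2j}(P·Q) = χ_j(P) · χ_j(Q). -/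
/-!
`χⱼ(P)` is the `j`-th coefficient of the Taylor expansion of `P` about `-1`, and Taylor expansion
is a ring homomorphism. The hypotheses say that `X ^ j` divides the expansions of both `P` and
`Q`, so the coefficient of `X ^ (2 * j)` in their product is the product of their `X ^ j`
coefficients.
-/

open Polynomial Finset

/-- The `j`-th higher Euler characteristic of an integer polynomial `P = Σ bᵢ tⁱ`:
`χⱼ(P) = Σᵢ (-1)^(i-j) · C(i,j) · bᵢ`. -/
def higherEulerChar (j : ℕ) (P : Polynomial ℤ) : ℤ :=
  ∑ i ∈ Finset.range (P.natDegree + 1), (-1) ^ (i - j) * (i.choose j : ℤ) * P.coeff i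

namespace Polynomial

theorem coeff_mul_add_of_X_pow_dvd {R : Type*} [Semiring R] {p q : R[X]} {m n : ℕ}
    (hp : X ^ m ∣ p) (hq : X ^ n ∣ q) : (p * q).coeff (m + n) = p.coeff m * q.coeff n := by
  obtain ⟨p, rfl⟩ := hp
  obtain ⟨q, rfl⟩ := hq
  rw [mul_assoc, ← mul_assoc p, ← X_pow_mul, mul_assoc, ← mul_assoc, ← pow_add]
  simp only [coeff_X_pow_mul', le_refl, ite_true, Nat.sub_self, mul_coeff_zero]

end Polynomial

theorem higherEulerChar_eq_coeff_taylor (j : ℕ) (P : ℤ[X]) :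
    higherEulerChar j P = (taylor (-1) P).coeff j := by
  rw [taylor_coeff, hasseDeriv_apply, sum_over_range _ (by simp), eval_finsetSum, higherEulerChar]
  refine sum_congr rfl fun i _ => ?_
  rw [eval_monomial]
  ring

/-- If `χᵣ(P) = 0` and `χᵣ(Q) = 0` for all `0 ≤ r < j`, then
`χ_{2j}(P·Q) = χⱼ(P)·χⱼ(Q)`. -/
theorem higherEulerChar_mul_two_j (P Q : Polynomial ℤ) (j : ℕ)
    (hP : ∀ r < j, higherEulerChar r P = 0) (hQ : ∀ r < j, higherEulerChar r Q = 0) :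
    higherEulerChar (2 * j) (P * Q) = higherEulerChar j P * higherEulerChar j Q := by
  simp only [higherEulerChar_eq_coeff_taylor] at *
  rw [taylor_mul, two_mul]
  exact coeff_mul_add_of_X_pow_dvd (X_pow_dvd_iff.2 hP) (X_pow_dvd_iff.2 hQ)
end

section
/- For a polynomial P ∈ ℤ[t] with coefficients b_i, define χ_j(P) = Σ_i (-1)^{i-j} · C(i,j) · b_i. Let N ∈ ℤ[t], let j ≥ 0, and set P = N · (1+t)^j. Then χ_k(P) = 0 for all 0 ≤ k < j, χ_j(P) = N(-1), and more generally χ_{k+j}(P) = χ_k(N) for all k ≥ 0. -/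
open Polynomial Finset

/-!
`χₖ(P)` is the `k`-th coefficient of `P(s - 1)`, i.e. of the Taylor expansion of `P` at `-1`,
by the binomial theorem. The substitution `t = s - 1` turns `(1 + t)ʲ` into `sʲ`, and
multiplying by `sʲ` shifts coefficients up by `j`.
-/

lemma higherEulerChar_eq_taylor_coeff (k : ℕ) (P : ℤ[X]) :
    higherEulerChar k P = (taylor (-1) P).coeff k := by
  rw [taylor_coeff, hasseDeriv_apply, eval_sum, higherEulerChar, sum_over_range]
  · simp only [eval_monomial]
    exact Finset.sum_congr rfl fun i _ => by ring
  · simp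

lemma taylor_neg_one_mul_one_add_X_pow {R : Type*} [CommRing R] (N : R[X]) (j : ℕ) :
    taylor (-1) (N * (1 + X) ^ j) = taylor (-1) N * X ^ j := by
  simp [taylor_mul, taylor_pow, taylor_X]

/-- If `P = N·(1+t)ʲ` then `χₖ(P) = 0` for `k < j`, `χⱼ(P) = N(-1)`, and
`χ_{k+j}(P) = χₖ(N)` for all `k ≥ 0`. -/
theorem higherEulerChar_mul_one_add_X_pow (N P : Polynomial ℤ) (j : ℕ)
    (h : P = N * (1 + X) ^ j) :
    (∀ k < j, higherEulerChar k P = 0) ∧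
      higherEulerChar j P = N.eval (-1) ∧
        ∀ k, higherEulerChar (k + j) P = higherEulerChar k N := by
  have hP (k : ℕ) : higherEulerChar k P = (taylor (-1) N * X ^ j).coeff k := by
    rw [higherEulerChar_eq_taylor_coeff, h, taylor_neg_one_mul_one_add_X_pow]
  refine ⟨fun k hk => ?_, ?_, fun k => ?_⟩
  · rw [hP, coeff_mul_X_pow', if_neg hk.not_ge]
  · rw [hP, coeff_mul_X_pow', if_pos le_rfl, Nat.sub_self, taylor_coeff_zero]
  · rw [hP, coeff_mul_X_pow, higherEulerChar_eq_taylor_coeff]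
end
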